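/- The tensor T ∈ Sym(2,3) with t_{111}=1, t_{122}=t_{212}=t_{221}=−1 and all other entries zero (the θ=0 case) has exactly three distinct symmetric best rank one approximations, with critical unit vectors (1,0)ᵀ, (−1/2, √3/2)ᵀ, and (−1/2, −√3/2)ᵀ (up to sign). -/

import Mathlib

/-!
Identify `u ∈ ℝ²` with `u 0 + i u 1 ∈ ℂ`. Then `⟨T0, x₀ ⊗ x₁ ⊗ x₂⟩ = Re (x₀ x₁ x₂)`, which lies in
`[-1, 1]` for unit vectors. As `‖T0‖² = 4`, for unit `x_j` and `F = ⟨T0, x₀ ⊗ x₁ ⊗ x₂⟩`,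
`‖T0 - s x₀ ⊗ x₁ ⊗ x₂‖² = 3 + (s - F)² + (1 - F²)`,
so the best distance is `√3`, and `λ u ⊗ u ⊗ u` attains it iff `λ = F = ±1`. Replacing `u` by `-u`
when `F = -1`, the best approximations are the `u ⊗ u ⊗ u` with `Re (u³) = 1`, i.e. with `u` a
cube root of unity.
-/

noncomputable section

/-- The decomposable tensor `x₁ ⊗ ⋯ ⊗ x_d`, as a multi-indexed array. -/
def dtens {ι : Type*} [Fintype ι] {n : ι → ℕ} (x : ∀ j, Fin (n j) → ℝ) :
    (∀ j, Fin (n j)) → ℝ :=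
  fun idx => ∏ j, x j (idx j)

/-- Entrywise inner product of tensors. -/
def tinner {ι : Type*} [Fintype ι] [DecidableEq ι] {n : ι → ℕ}
    (S T : (∀ j, Fin (n j)) → ℝ) : ℝ :=
  ∑ idx, S idx * T idx

/-- Hilbert–Schmidt norm of a tensor. -/
def hsNorm {ι : Type*} [Fintype ι] [DecidableEq ι] {n : ι → ℕ}
    (T : (∀ j, Fin (n j)) → ℝ) : ℝ :=
  Real.sqrt (∑ idx, T idx ^ 2)

/-- `v` is a unit vector in `ℝ^m`. -/
def isUnitVec {m : ℕ} (v : Fin m → ℝ) : Prop := ∑ i, v i ^ 2 = 1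

/-- The spectral (`(∞,2)`-Schatten) norm of a tensor: the supremum of
`|⟨T, x₁ ⊗ ⋯ ⊗ x_d⟩|` over unit vectors `x_j`. -/
def specNorm {ι : Type*} [Fintype ι] [DecidableEq ι] {n : ι → ℕ}
    (T : (∀ j, Fin (n j)) → ℝ) : ℝ :=
  sSup {r | ∃ x : ∀ j, Fin (n j) → ℝ, (∀ j, isUnitVec (x j)) ∧ r = |tinner T (dtens x)|}

/-- The symmetric tensor `T ∈ Sym(2,3)` with `t₁₁₁ = 1`, `t₁₂₂ = t₂₁₂ = t₂₂₁ = -1`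
and all other entries zero (the `θ = 0` case). -/
def T0 : (Fin 3 → Fin 2) → ℝ := fun idx =>
  let k := ∑ j, ((idx j : ℕ))
  if k = 0 then 1 else if k = 2 then -1 else 0

/-- `B` is a symmetric best rank one approximation of `T`: `B = λ u ⊗ u ⊗ u` for a unit
vector `u`, and `B` minimizes the Hilbert–Schmidt distance to `T` over all decomposable
tensors with unit vector factors. -/
def IsSymBestRankOne (T B : (Fin 3 → Fin 2) → ℝ) : Prop :=
  (∃ (lam : ℝ) (u : Fin 2 → ℝ), isUnitVec u ∧ B = lam • dtens (fun _ : Fin 3 => u)) ∧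
  ∀ (s : ℝ) (x : Fin 3 → Fin 2 → ℝ), (∀ j, isUnitVec (x j)) →
    hsNorm (T - B) ≤ hsNorm (T - s • dtens x)


theorem Fintype.sum_fun_fin_succ {M α : Type*} [AddCommMonoid M] [Fintype α] {n : ℕ}
    (g : (Fin (n + 1) → α) → M) : ∑ f, g f = ∑ a, ∑ f, g (Matrix.vecCons a f) :=
  ((Fin.consEquiv fun _ => α).sum_comp g).symm.trans (Fintype.sum_prod_type _)

section Tensor

variable {ι : Type*} [Fintype ι] [DecidableEq ι] {n : ι → ℕ}

theorem sum_sq_dtens (x : ∀ j, Fin (n j) → ℝ) :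
    ∑ idx, dtens x idx ^ 2 = ∏ j, ∑ i, x j i ^ 2 := by
  simp only [dtens, ← Finset.prod_pow, Fintype.prod_sum]

theorem sum_sq_dtens_of_isUnitVec {x : ∀ j, Fin (n j) → ℝ} (hx : ∀ j, isUnitVec (x j)) :
    ∑ idx, dtens x idx ^ 2 = 1 := by
  rw [sum_sq_dtens]
  exact Finset.prod_eq_one fun j _ => hx j

theorem hsNorm_le_hsNorm_iff (S T : (∀ j, Fin (n j)) → ℝ) :
    hsNorm S ≤ hsNorm T ↔ ∑ idx, S idx ^ 2 ≤ ∑ idx, T idx ^ 2 :=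
  Real.sqrt_le_sqrt_iff (by positivity)

theorem sum_sq_sub_smul (T X : (∀ j, Fin (n j)) → ℝ) (s : ℝ) :
    ∑ idx, (T - s • X) idx ^ 2
      = ∑ idx, T idx ^ 2 - 2 * s * tinner T X + s ^ 2 * ∑ idx, X idx ^ 2 := by
  simp only [Pi.sub_apply, Pi.smul_apply, smul_eq_mul, tinner, Finset.mul_sum,
    ← Finset.sum_sub_distrib, ← Finset.sum_add_distrib]
  exact Finset.sum_congr rfl fun _ _ => by ring

end Tensor

theorem dtens_const_apply_const {d m : ℕ} (u : Fin m → ℝ) (i : Fin m) :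
    dtens (fun _ : Fin d => u) (fun _ => i) = u i ^ d :=
  Fin.prod_const d (u i)

theorem dtens_const_injective {d m : ℕ} (hd : Odd d) :
    Function.Injective fun u : Fin m → ℝ => dtens fun _ : Fin d => u := by
  intro u v huv
  funext i
  have := congrFun huv fun _ => i
  dsimp only at this
  rwa [dtens_const_apply_const, dtens_const_apply_const, hd.pow_inj] at this

theorem dtens_neg_const {m : ℕ} (u : Fin m → ℝ) :
    dtens (fun _ : Fin 3 => -u) = (-1 : ℝ) • dtens fun _ : Fin 3 => u := by
  funext idx
  simp only [dtens, Pi.neg_apply, Pi.smul_apply, smul_eq_mul, Fin.prod_univ_three]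
  ring

theorem tinner_T0_dtens (x : Fin 3 → Fin 2 → ℝ) :
    tinner T0 (dtens x) = x 0 0 * x 1 0 * x 2 0 - x 0 0 * x 1 1 * x 2 1
      - x 0 1 * x 1 0 * x 2 1 - x 0 1 * x 1 1 * x 2 0 := by
  simp [tinner, Fintype.sum_fun_fin_succ, Fin.sum_univ_two, T0, dtens, Fin.prod_univ_three,
    Fin.sum_univ_three]
  ring

theorem tinner_T0_dtens_const (u : Fin 2 → ℝ) :
    tinner T0 (dtens fun _ : Fin 3 => u) = u 0 ^ 3 - 3 * u 0 * u 1 ^ 2 := by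
  rw [tinner_T0_dtens]
  ring

theorem sum_sq_T0 : ∑ idx, T0 idx ^ 2 = 4 := by
  simp [Fintype.sum_fun_fin_succ, Fin.sum_univ_two, T0, Fin.sum_univ_three]
  norm_num

theorem sq_tinner_T0_dtens_le_one {x : Fin 3 → Fin 2 → ℝ} (hx : ∀ j, isUnitVec (x j)) :
    tinner T0 (dtens x) ^ 2 ≤ 1 := by
  have h0 := hx 0; have h1 := hx 1; have h2 := hx 2
  simp only [isUnitVec, Fin.sum_univ_two] at h0 h1 h2
  rw [tinner_T0_dtens]
  set p := x 0 0 * x 1 0 - x 0 1 * x 1 1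
  set q := x 0 0 * x 1 1 + x 0 1 * x 1 0
  have hpq : p ^ 2 + q ^ 2 = 1 := by
    linear_combination (x 1 0 ^ 2 + x 1 1 ^ 2) * h0 + h1
  -- `p + i q = x₀ x₁`, and `|Re (x₀ x₁ x₂)|² ≤ |x₀ x₁|² |x₂|²`
  nlinarith [sq_nonneg (p * x 2 1 + q * x 2 0)]

theorem sum_sq_T0_sub_smul_dtens (s : ℝ) {x : Fin 3 → Fin 2 → ℝ} (hx : ∀ j, isUnitVec (x j)) :
    ∑ idx, (T0 - s • dtens x) idx ^ 2
      = 3 + (s - tinner T0 (dtens x)) ^ 2 + (1 - tinner T0 (dtens x) ^ 2) := by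
  rw [sum_sq_sub_smul, sum_sq_T0, sum_sq_dtens_of_isUnitVec hx]
  ring

theorem isUnitVec_and_cubic_eq_one_iff {u : Fin 2 → ℝ} :
    isUnitVec u ∧ u 0 ^ 3 - 3 * u 0 * u 1 ^ 2 = 1 ↔
      u = ![1, 0] ∨ u = ![-(1 / 2), √3 / 2] ∨ u = ![-(1 / 2), -(√3 / 2)] := by
  have hs : √3 ^ 2 = 3 := Real.sq_sqrt (by norm_num)
  simp only [isUnitVec, funext_iff, Fin.forall_fin_two, Fin.sum_univ_two, Matrix.cons_val_zero,
    Matrix.cons_val_one]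
  generalize u 0 = a, u 1 = b
  constructor
  · rintro ⟨hu, hf⟩
    have : (a - 1) * (2 * a + 1) ^ 2 = 0 := by linear_combination hf + 3 * a * hu
    rcases mul_eq_zero.1 this with ha | ha
    · have ha : a = 1 := by linarith
      have hb : b ^ 2 = 0 := by linear_combination hu - (a + 1) * ha
      exact Or.inl ⟨ha, pow_eq_zero_iff two_ne_zero |>.1 hb⟩
    · have ha : a = -(1 / 2) := by linarith [pow_eq_zero_iff two_ne_zero |>.1 ha]
      have hb : (b - √3 / 2) * (b + √3 / 2) = 0 := by
        linear_combination hu - (1 / 4) * hs - (a - 1 / 2) * ha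
      rcases mul_eq_zero.1 hb with hb | hb
      · exact Or.inr (Or.inl ⟨ha, by linarith⟩)
      · exact Or.inr (Or.inr ⟨ha, by linarith⟩)
  · rintro (⟨rfl, rfl⟩ | ⟨rfl, rfl⟩ | ⟨rfl, rfl⟩) <;> constructor <;> linarith [hs]

theorem isSymBestRankOne_T0_dtens {u : Fin 2 → ℝ} (hu : isUnitVec u)
    (hF : tinner T0 (dtens fun _ : Fin 3 => u) = 1) :
    IsSymBestRankOne T0 (dtens fun _ : Fin 3 => u) := by
  refine ⟨⟨1, u, hu, (one_smul ℝ _).symm⟩, fun s x hx => ?_⟩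
  have hT := sum_sq_T0_sub_smul_dtens 1 fun _ : Fin 3 => hu
  rw [one_smul, hF] at hT
  rw [hsNorm_le_hsNorm_iff, hT, sum_sq_T0_sub_smul_dtens s hx]
  nlinarith [sq_tinner_T0_dtens_le_one hx, sq_nonneg (s - tinner T0 (dtens x))]

theorem exists_dtens_eq_of_isSymBestRankOne_T0 {B : (Fin 3 → Fin 2) → ℝ}
    (hB : IsSymBestRankOne T0 B) :
    ∃ u : Fin 2 → ℝ, (isUnitVec u ∧ u 0 ^ 3 - 3 * u 0 * u 1 ^ 2 = 1) ∧
      dtens (fun _ : Fin 3 => u) = B := by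
  obtain ⟨⟨lam, u, hu, rfl⟩, hmin⟩ := hB
  have he : isUnitVec ![(1 : ℝ), 0] := by simp [isUnitVec]
  have hcmp := hmin 1 (fun _ => ![1, 0]) fun _ => he
  rw [hsNorm_le_hsNorm_iff, sum_sq_T0_sub_smul_dtens _ fun _ => hu,
    sum_sq_T0_sub_smul_dtens _ fun _ => he, tinner_T0_dtens_const,
    tinner_T0_dtens_const] at hcmp
  have hF := sq_tinner_T0_dtens_le_one fun _ : Fin 3 => hu
  rw [tinner_T0_dtens_const] at hF
  set F := u 0 ^ 3 - 3 * u 0 * u 1 ^ 2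
  norm_num at hcmp
  have hlam : lam = F := by nlinarith
  rcases sq_eq_one_iff.1 (by nlinarith : F ^ 2 = 1) with h | h
  · exact ⟨u, ⟨hu, h⟩, by rw [hlam, h, one_smul]⟩
  · refine ⟨-u, ⟨by simpa [isUnitVec] using hu, ?_⟩, by rw [dtens_neg_const, hlam, h]⟩
    simp only [Pi.neg_apply]
    linear_combination -h

theorem isSymBestRankOne_T0_iff {B : (Fin 3 → Fin 2) → ℝ} :
    IsSymBestRankOne T0 B ↔ ∃ u : Fin 2 → ℝ, (isUnitVec u ∧ u 0 ^ 3 - 3 * u 0 * u 1 ^ 2 = 1) ∧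
      dtens (fun _ : Fin 3 => u) = B := by
  refine ⟨exists_dtens_eq_of_isSymBestRankOne_T0, ?_⟩
  rintro ⟨u, ⟨hu, hF⟩, rfl⟩
  exact isSymBestRankOne_T0_dtens hu (by rw [tinner_T0_dtens_const, hF])

/-- The tensor `T0` has exactly three distinct symmetric best rank one approximations,
with critical unit vectors `(1,0)ᵀ`, `(-1/2, √3/2)ᵀ` and `(-1/2, -√3/2)ᵀ` (up to sign). -/
theorem stmt14 :
    {B | IsSymBestRankOne T0 B} =
        {dtens (fun _ : Fin 3 => ![(1 : ℝ), 0]),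
         dtens (fun _ : Fin 3 => ![(-(1 / 2) : ℝ), Real.sqrt 3 / 2]),
         dtens (fun _ : Fin 3 => ![(-(1 / 2) : ℝ), -(Real.sqrt 3 / 2)])} ∧
      dtens (fun _ : Fin 3 => ![(1 : ℝ), 0]) ≠
          dtens (fun _ : Fin 3 => ![(-(1 / 2) : ℝ), Real.sqrt 3 / 2]) ∧
      dtens (fun _ : Fin 3 => ![(1 : ℝ), 0]) ≠
          dtens (fun _ : Fin 3 => ![(-(1 / 2) : ℝ), -(Real.sqrt 3 / 2)]) ∧
      dtens (fun _ : Fin 3 => ![(-(1 / 2) : ℝ), Real.sqrt 3 / 2]) ≠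
          dtens (fun _ : Fin 3 => ![(-(1 / 2) : ℝ), -(Real.sqrt 3 / 2)]) := by
  have hroots : {u : Fin 2 → ℝ | isUnitVec u ∧ u 0 ^ 3 - 3 * u 0 * u 1 ^ 2 = 1} =
      {![1, 0], ![-(1 / 2), √3 / 2], ![-(1 / 2), -(√3 / 2)]} :=
    Set.ext fun _ => isUnitVec_and_cubic_eq_one_iff
  have hbest : {B | IsSymBestRankOne T0 B} = (fun u : Fin 2 → ℝ => dtens fun _ : Fin 3 => u) ''
      {u | isUnitVec u ∧ u 0 ^ 3 - 3 * u 0 * u 1 ^ 2 = 1} :=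
    Set.ext fun _ => isSymBestRankOne_T0_iff
  have hinj := dtens_const_injective (m := 2) (by decide : Odd 3)
  refine ⟨by rw [hbest, hroots, Set.image_insert_eq, Set.image_insert_eq, Set.image_singleton],
    hinj.ne ?_, hinj.ne ?_, hinj.ne ?_⟩ <;>
    norm_num [funext_iff, Fin.forall_fin_two, CharZero.eq_neg_self_iff]
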